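/- For every A > 0 there exists a constant C = C(A) > 0 such that the following holds. Let j ∈ ℕ, j ≥ 1, let ψ₁, ψ₂ : ℝ → ℂ be smooth functions supported in [1/8, 8] whose derivatives up to order 10 are bounded in absolute value by A, let α ∈ [1/4, 4], let β ∈ {1+α, 1−α, −1+α, −1−α}, and for s > 0 set I(s) = 2^{j+2} | ∫₀^∞ e^{i(β 2^j z + s 2^{2j} z²)} ψ₁(z) ψ₂(α z) z dz |. Then: I(s) ≤ C 2^{j} for 0 < s ≤ 2^{−2j}; I(s) ≤ C s^{−1/2} for 2^{−2j} < s ≤ 40·2^{−j}; and I(s) ≤ C 2^{j} (2^{2j} s)^{−10} for s > 40·2^{−j}. -/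

import Mathlib

open MeasureTheory Real Complex Set

noncomputable section

namespace OscAux

/-- phase derivative -/
def pf (lam c z : ℝ) : ℝ := c + 2 * lam * z

/-- oscillatory factor -/
def Ef (lam c : ℝ) (z : ℝ) : ℂ := Complex.exp (Complex.I * ((c * z + lam * z ^ 2 : ℝ) : ℂ))

/-- inverse of i φ' -/
def vf (lam c : ℝ) (z : ℝ) : ℂ := (Complex.I * ((pf lam c z : ℝ) : ℂ))⁻¹

lemma pf_hasDerivAt (lam c z : ℝ) : HasDerivAt (pf lam c) (2 * lam) z := by
  exact (((hasDerivAt_id z).const_mul (2 * lam)).const_add c).congr_deriv (mul_one _)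

lemma pf_cont (lam c : ℝ) : Continuous (pf lam c) := by
  unfold pf; fun_prop

lemma Ef_hasDerivAt (lam c z : ℝ) :
    HasDerivAt (Ef lam c) (Complex.I * ((pf lam c z : ℝ) : ℂ) * Ef lam c z) z := by
  have h1 : HasDerivAt (fun z : ℝ => c * z + lam * z ^ 2) (pf lam c z) z := by
    have := ((hasDerivAt_id z).const_mul c).add ((hasDerivAt_pow 2 z).const_mul lam)
    refine this.congr_deriv ?_
    simp only [pf, Nat.cast_ofNat]; ring
  have h2 : HasDerivAt (fun z : ℝ => ((c * z + lam * z ^ 2 : ℝ) : ℂ)) ((pf lam c z : ℝ) : ℂ) z :=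
    h1.ofReal_comp
  have h3 := (h2.const_mul Complex.I).cexp
  unfold Ef
  exact h3.congr_deriv (by ring)

lemma Ef_norm (lam c z : ℝ) : ‖Ef lam c z‖ = 1 := by
  unfold Ef
  rw [Complex.norm_exp]
  simp only [Complex.mul_re, Complex.I_re, Complex.I_im, Complex.ofReal_re, Complex.ofReal_im]
  norm_num

lemma Ef_cont (lam c : ℝ) : Continuous (Ef lam c) := by
  unfold Ef
  fun_prop

lemma vf_norm (lam c : ℝ) {z : ℝ} : ‖vf lam c z‖ = |pf lam c z|⁻¹ := by
  simp [vf]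

lemma vf_hasDerivAt (lam c : ℝ) {z : ℝ} (hz : pf lam c z ≠ 0) :
    HasDerivAt (vf lam c) (-(2 * lam) * Complex.I * (vf lam c z) ^ 2) z := by
  have hp : HasDerivAt (fun z => Complex.I * ((pf lam c z : ℝ) : ℂ))
      (Complex.I * (2 * lam : ℝ)) z := ((pf_hasDerivAt lam c z).ofReal_comp).const_mul _
  have hne : Complex.I * ((pf lam c z : ℝ) : ℂ) ≠ 0 := by
    simp [Complex.I_ne_zero, Complex.ofReal_eq_zero, hz]
  have h4 := (hasDerivAt_inv hne).comp z hp
  refine h4.congr_deriv ?_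
  unfold vf
  have hq : Complex.I * ((pf lam c z : ℝ) : ℂ) ≠ 0 := hne
  field_simp
  push_cast
  ring

lemma vf_contOn (lam c : ℝ) {s : Set ℝ} (h : ∀ z ∈ s, pf lam c z ≠ 0) :
    ContinuousOn (vf lam c) s := by
  apply ContinuousOn.inv₀
  · exact (continuous_const.mul (Complex.continuous_ofReal.comp (pf_cont lam c))).continuousOn
  · intro z hz
    simp [Complex.I_ne_zero, Complex.ofReal_eq_zero, h z hz]

/-- Integration by parts: if `g = (i φ') u` on `[a,b]` and `u' = w` there, then
`∫ E g = E b u b - E a u a - ∫ E w`. -/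
lemma ibp_core (lam c a b : ℝ) (hab : a ≤ b) (g u w : ℝ → ℂ)
    (hp : ∀ z ∈ Set.Icc a b, pf lam c z ≠ 0)
    (hu : ∀ z ∈ Set.Icc a b, HasDerivAt u (w z) z)
    (hwc : ContinuousOn w (Set.Icc a b))
    (hgu : ∀ z ∈ Set.Icc a b, g z = Complex.I * ((pf lam c z : ℝ) : ℂ) * u z)
    (hgc : ContinuousOn g (Set.Icc a b)) :
    ∫ z in a..b, Ef lam c z * g z
      = Ef lam c b * u b - Ef lam c a * u a - ∫ z in a..b, Ef lam c z * w z := by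
  have huIcc : Set.uIcc a b = Set.Icc a b := Set.uIcc_of_le hab
  have hFderiv : ∀ z ∈ Set.uIcc a b,
      HasDerivAt (fun z => Ef lam c z * u z) (Ef lam c z * g z + Ef lam c z * w z) z := by
    intro z hz
    rw [huIcc] at hz
    have := (Ef_hasDerivAt lam c z).mul (hu z hz)
    refine this.congr_deriv ?_
    rw [hgu z hz]; ring
  have hcontEg : ContinuousOn (fun z => Ef lam c z * g z) (Set.Icc a b) :=
    (Ef_cont lam c).continuousOn.mul hgc
  have hcontEw : ContinuousOn (fun z => Ef lam c z * w z) (Set.Icc a b) :=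
    (Ef_cont lam c).continuousOn.mul hwc
  have hintEg : IntervalIntegrable (fun z => Ef lam c z * g z) volume a b := by
    rw [intervalIntegrable_iff_integrableOn_Icc_of_le hab]
    exact hcontEg.integrableOn_compact isCompact_Icc
  have hintEw : IntervalIntegrable (fun z => Ef lam c z * w z) volume a b := by
    rw [intervalIntegrable_iff_integrableOn_Icc_of_le hab]
    exact hcontEw.integrableOn_compact isCompact_Icc
  have hFTC := intervalIntegral.integral_eq_sub_of_hasDerivAt hFderiv
    (by exact (hintEg.add hintEw))
  rw [intervalIntegral.integral_add hintEg hintEw] at hFTC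
  linear_combination hFTC

end OscAux

noncomputable section
namespace OscAux

/-- recursive constants -/
def Kf : ℕ → ℝ
  | 0 => 8
  | (n+1) => 8 + Kf n + 2 * (Kf n) ^ 2

lemma Kf_ge_eight : ∀ n, (8:ℝ) ≤ Kf n
  | 0 => le_refl _
  | (n+1) => by
      have := Kf_ge_eight n
      simp only [Kf]
      nlinarith

lemma Kf_pos (n : ℕ) : (0:ℝ) < Kf n := lt_of_lt_of_le (by norm_num) (Kf_ge_eight n)

lemma Kf_mono (n : ℕ) : Kf n ≤ Kf (n+1) := by
  have := Kf_pos n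
  simp only [Kf]
  nlinarith

/-- Admissible chain of derivatives, all supported in `[1/8,8]` and bounded by `B`,
differentiable on the set where the phase derivative is positive. -/
def Adm (lam c : ℝ) : ℕ → ℝ → (ℝ → ℂ) → Prop
  | 0, B, g => (∀ z, z ∉ Set.Icc (1/8:ℝ) 8 → g z = 0) ∧ (∀ z, ‖g z‖ ≤ B)
  | (n+1), B, g => ((∀ z, z ∉ Set.Icc (1/8:ℝ) 8 → g z = 0) ∧ (∀ z, ‖g z‖ ≤ B)) ∧
      ∃ g' : ℝ → ℂ, (∀ z, 0 < pf lam c z → HasDerivAt g (g' z) z) ∧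
        ContinuousOn g' {z | 0 < pf lam c z} ∧ Adm lam c n B g'

lemma Adm.base {lam c : ℝ} {n : ℕ} {B : ℝ} {g : ℝ → ℂ} (h : Adm lam c n B g) :
    (∀ z, z ∉ Set.Icc (1/8:ℝ) 8 → g z = 0) ∧ (∀ z, ‖g z‖ ≤ B) := by
  cases n with
  | zero => exact h
  | succ n => exact h.1

lemma Adm.mono_deg {lam c : ℝ} : ∀ {n : ℕ} {B : ℝ} {g : ℝ → ℂ},
    Adm lam c (n+1) B g → Adm lam c n B g := by
  intro n
  induction n with
  | zero => intro B g h; exact h.1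
  | succ n ih =>
      intro B g h
      obtain ⟨hb, g', hd, hc, hA⟩ := h
      exact ⟨hb, g', hd, hc, ih hA⟩

lemma Adm.of_le {lam c : ℝ} : ∀ {n : ℕ} {B B' : ℝ} {g : ℝ → ℂ},
    Adm lam c n B g → B ≤ B' → Adm lam c n B' g := by
  intro n
  induction n with
  | zero => intro B B' g h hle; exact ⟨h.1, fun z => (h.2 z).trans hle⟩
  | succ n ih =>
      intro B B' g h hle
      obtain ⟨⟨hs, hbd⟩, g', hd, hc, hA⟩ := h
      exact ⟨⟨hs, fun z => (hbd z).trans hle⟩, g', hd, hc, ih hA hle⟩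

lemma Adm.add {lam c : ℝ} : ∀ {n : ℕ} {B₁ B₂ : ℝ} {g₁ g₂ : ℝ → ℂ},
    Adm lam c n B₁ g₁ → Adm lam c n B₂ g₂ →
    Adm lam c n (B₁ + B₂) (fun z => g₁ z + g₂ z) := by
  intro n
  induction n with
  | zero =>
      intro B₁ B₂ g₁ g₂ h₁ h₂
      refine ⟨fun z hz => by simp only [h₁.1 z hz, h₂.1 z hz, add_zero], fun z => ?_⟩
      exact (norm_add_le _ _).trans (add_le_add (h₁.2 z) (h₂.2 z))
  | succ n ih =>
      intro B₁ B₂ g₁ g₂ h₁ h₂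
      obtain ⟨⟨hs₁, hb₁⟩, g₁', hd₁, hc₁, hA₁⟩ := h₁
      obtain ⟨⟨hs₂, hb₂⟩, g₂', hd₂, hc₂, hA₂⟩ := h₂
      refine ⟨⟨fun z hz => by simp only [hs₁ z hz, hs₂ z hz, add_zero], fun z => ?_⟩,
        fun z => g₁' z + g₂' z, fun z hz => (hd₁ z hz).add (hd₂ z hz),
        hc₁.add hc₂, ih hA₁ hA₂⟩
      exact (norm_add_le _ _).trans (add_le_add (hb₁ z) (hb₂ z))

lemma Adm.cmul {lam c : ℝ} (a : ℂ) : ∀ {n : ℕ} {B : ℝ} {g : ℝ → ℂ},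
    Adm lam c n B g → Adm lam c n (‖a‖ * B) (fun z => a * g z) := by
  intro n
  induction n with
  | zero =>
      intro B g h
      refine ⟨fun z hz => by simp only [h.1 z hz, mul_zero], fun z => ?_⟩
      rw [norm_mul]
      exact mul_le_mul_of_nonneg_left (h.2 z) (norm_nonneg a)
  | succ n ih =>
      intro B g h
      obtain ⟨⟨hs, hb⟩, g', hd, hc, hA⟩ := h
      refine ⟨⟨fun z hz => by simp only [hs z hz, mul_zero], fun z => ?_⟩,
        fun z => a * g' z, fun z hz => (hd z hz).const_mul a,
        continuousOn_const.mul hc, ih hA⟩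
      rw [norm_mul]
      exact mul_le_mul_of_nonneg_left (hb z) (norm_nonneg a)

section Slope

variable {lam c : ℝ} (hlam : 1 ≤ lam)
  (hslope : ∀ z ∈ Set.Icc (1/8:ℝ) 8, lam / 8 ≤ pf lam c z)

include hlam hslope

lemma vf_bound_on : ∀ z ∈ Set.Icc (1/8:ℝ) 8, ‖vf lam c z‖ ≤ 8 / lam := by
  intro z hz
  have hp := hslope z hz
  have hl : (0:ℝ) < lam := lt_of_lt_of_le one_pos hlam
  have hppos : 0 < pf lam c z := lt_of_lt_of_le (by positivity) hp
  rw [vf_norm, abs_of_pos hppos]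
  have h1 : (pf lam c z)⁻¹ ≤ (lam/8)⁻¹ := by
    apply inv_anti₀ (by positivity) hp
  simpa [inv_div] using h1

lemma pf_pos_on : ∀ z ∈ Set.Icc (1/8:ℝ) 8, 0 < pf lam c z := by
  intro z hz
  have hl : (0:ℝ) < lam := lt_of_lt_of_le one_pos hlam
  exact lt_of_lt_of_le (by positivity) (hslope z hz)

lemma adm_mul_vf : ∀ (n : ℕ) (B : ℝ) (g : ℝ → ℂ), 0 ≤ B → Adm lam c n B g →
    Adm lam c n (B * Kf n / lam) (fun z => g z * vf lam c z) := by
  have hl : (0:ℝ) < lam := lt_of_lt_of_le one_pos hlam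
  have hbase : ∀ (n : ℕ) (B : ℝ) (g : ℝ → ℂ), 0 ≤ B →
      (∀ z, z ∉ Set.Icc (1/8:ℝ) 8 → g z = 0) → (∀ z, ‖g z‖ ≤ B) →
      ((∀ z, z ∉ Set.Icc (1/8:ℝ) 8 → g z * vf lam c z = 0) ∧
        (∀ z, ‖g z * vf lam c z‖ ≤ B * Kf n / lam)) := by
    intro n B g hB hs hb
    constructor
    · intro z hz; rw [hs z hz, zero_mul]
    · intro z
      by_cases hz : z ∈ Set.Icc (1/8:ℝ) 8
      · rw [norm_mul]
        calc ‖g z‖ * ‖vf lam c z‖ ≤ B * (8 / lam) := by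
              apply mul_le_mul (hb z) (vf_bound_on hlam hslope z hz) (norm_nonneg _) hB
          _ ≤ B * Kf n / lam := by
              rw [mul_div_assoc]
              gcongr
              exact Kf_ge_eight n
      · rw [hs z hz, zero_mul, norm_zero]
        have := Kf_pos n
        positivity
  intro n
  induction n with
  | zero =>
      intro B g hB h
      exact hbase 0 B g hB h.1 h.2
  | succ n ih =>
      intro B g hB h
      obtain ⟨⟨hs, hb⟩, g', hd, hc, hA⟩ := h
      have hKn : (0:ℝ) < Kf n := Kf_pos n
      have hB1 : (0:ℝ) ≤ B * Kf n / lam := by positivity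
      -- the three pieces
      have h1 : Adm lam c n (B * Kf n / lam) (fun z => g' z * vf lam c z) :=
        ih B g' hB hA
      have h2 : Adm lam c n (B * Kf n / lam) (fun z => g z * vf lam c z) :=
        ih B g hB (Adm.mono_deg ⟨⟨hs, hb⟩, g', hd, hc, hA⟩)
      have h3 : Adm lam c n ((B * Kf n / lam) * Kf n / lam)
          (fun z => (g z * vf lam c z) * vf lam c z) := ih _ _ hB1 h2
      have h4 : Adm lam c n (‖(-(2*lam) * Complex.I : ℂ)‖ * ((B * Kf n / lam) * Kf n / lam))
          (fun z => (-(2*lam) * Complex.I) * ((g z * vf lam c z) * vf lam c z)) :=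
        Adm.cmul _ h3
      have hnrm : ‖(-(2*lam) * Complex.I : ℂ)‖ = 2 * lam := by
        simp [norm_mul, abs_of_pos hl]
      rw [hnrm] at h4
      have h5 := Adm.add h1 h4
      have hle : B * Kf n / lam + 2 * lam * (B * Kf n / lam * Kf n / lam)
          ≤ B * Kf (n+1) / lam := by
        have hKsucc : Kf (n+1) = 8 + Kf n + 2 * (Kf n)^2 := rfl
        rw [hKsucc]
        have hln : lam ≠ 0 := ne_of_gt hl
        have e1 : B * Kf n / lam + 2 * lam * (B * Kf n / lam * Kf n / lam)
            = B * (Kf n + 2 * Kf n ^ 2) / lam := by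
          field_simp
        rw [e1, div_le_div_iff₀ hl hl]
        nlinarith [mul_nonneg hB hl.le, mul_nonneg (mul_nonneg hB hl.le) hl.le,
          mul_nonneg hB hKn.le, sq_nonneg (Kf n), hKn,
          mul_nonneg (mul_nonneg hB (mul_pos hKn hKn).le) hl.le,
          mul_nonneg (mul_nonneg hB hKn.le) hl.le]
      -- assemble
      refine ⟨hbase (n+1) B g hB hs hb, ?_⟩
      refine ⟨fun z => g' z * vf lam c z
          + (-(2*lam) * Complex.I) * ((g z * vf lam c z) * vf lam c z), ?_, ?_, ?_⟩
      · intro z hz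
        have hne : pf lam c z ≠ 0 := ne_of_gt hz
        have := (hd z hz).mul (vf_hasDerivAt lam c hne)
        exact this.congr_deriv (by ring)
      · have hvc : ContinuousOn (vf lam c) {z | 0 < pf lam c z} :=
          vf_contOn lam c (fun z hz => ne_of_gt hz)
        have hgc : ContinuousOn g {z | 0 < pf lam c z} := by
          intro z hz
          exact ((hd z hz).continuousAt).continuousWithinAt
        exact (hc.mul hvc).add (continuousOn_const.mul ((hgc.mul hvc).mul hvc))
      · exact (Adm.of_le h5 hle)

lemma regime3 (hU : ∀ z ∈ Set.Icc (1/10:ℝ) 9, 0 < pf lam c z) :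
    ∀ (n : ℕ) (B : ℝ) (g : ℝ → ℂ), 0 ≤ B → Adm lam c n B g →
    ‖∫ z in (1/10:ℝ)..9, Ef lam c z * g z‖ ≤ 9 * (B * (Kf n / lam) ^ n) := by
  have hl : (0:ℝ) < lam := lt_of_lt_of_le one_pos hlam
  intro n
  induction n with
  | zero =>
      intro B g hB h
      have hbd : ∀ z ∈ Set.uIoc (1/10:ℝ) 9, ‖Ef lam c z * g z‖ ≤ B := by
        intro z _
        rw [norm_mul, Ef_norm, one_mul]
        exact h.2 z
      have := intervalIntegral.norm_integral_le_of_norm_le_const hbd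
      simp only [pow_zero, mul_one]
      calc ‖∫ z in (1/10:ℝ)..9, Ef lam c z * g z‖ ≤ B * |(9:ℝ) - 1/10| := this
        _ ≤ 9 * B := by rw [abs_of_pos (by norm_num)]; nlinarith
  | succ n ih =>
      intro B g hB h
      have hgv := adm_mul_vf hlam hslope (n+1) B g hB h
      obtain ⟨⟨hsv, hbv⟩, w, hdw, hcw, hAw⟩ := hgv
      obtain ⟨⟨hsg, hbg⟩, g', hdg, hcg, hAg⟩ := h
      have hKn1 : (0:ℝ) < Kf (n+1) := Kf_pos (n+1)
      have hsub : Set.Icc (1/10:ℝ) 9 ⊆ {z | 0 < pf lam c z} := fun z hz => hU z hz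
      have hibp := ibp_core lam c (1/10) 9 (by norm_num) g
          (fun z => g z * vf lam c z) w
          (fun z hz => ne_of_gt (hU z hz))
          (fun z hz => hdw z (hU z hz))
          (hcw.mono hsub)
          (fun z hz => ?_) ?_
      · rw [hibp]
        have h19 : (1/10:ℝ) ∉ Set.Icc (1/8:ℝ) 8 := by
          simp only [Set.mem_Icc]; intro hcon; norm_num at hcon
        have h9 : (9:ℝ) ∉ Set.Icc (1/8:ℝ) 8 := by
          simp only [Set.mem_Icc]; intro hcon; norm_num at hcon
        rw [show g 9 * vf lam c 9 = 0 from hsv _ h9, show g (1/10) * vf lam c (1/10) = 0 from hsv _ h19, mul_zero, mul_zero, sub_zero, zero_sub, norm_neg]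
        have hBw : (0:ℝ) ≤ B * Kf (n+1) / lam := by positivity
        have := ih (B * Kf (n+1) / lam) w hBw hAw
        calc ‖∫ z in (1/10:ℝ)..9, Ef lam c z * w z‖
            ≤ 9 * (B * Kf (n+1) / lam * (Kf n / lam) ^ n) := this
          _ ≤ 9 * (B * (Kf (n+1) / lam) ^ (n+1)) := by
              have hKn : (0:ℝ) < Kf n := Kf_pos n
              have h0 : (0:ℝ) ≤ Kf n / lam := by positivity
              have h1 : Kf n / lam ≤ Kf (n+1) / lam := by
                gcongr
                exact Kf_mono n
              have hmono : (Kf n / lam) ^ n ≤ (Kf (n+1) / lam) ^ n :=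
                pow_le_pow_left₀ h0 h1 n
              have e : B * (Kf (n+1) / lam) ^ (n+1)
                  = B * Kf (n+1) / lam * (Kf (n+1) / lam) ^ n := by
                rw [pow_succ']; ring
              rw [e]
              have hBw2 : (0:ℝ) ≤ B * Kf (n+1) / lam := by positivity
              nlinarith [mul_le_mul_of_nonneg_left hmono hBw2]
      · -- hgu : g z = I * pf * (g z * vf z)
        have hpz : pf lam c z ≠ 0 := ne_of_gt (hU z hz)
        have hne : Complex.I * ((pf lam c z : ℝ) : ℂ) ≠ 0 := by
          simp [Complex.I_ne_zero, Complex.ofReal_eq_zero, hpz]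
        have hpc : ((pf lam c z : ℝ) : ℂ) ≠ 0 := by exact_mod_cast hpz
        unfold vf
        field_simp
      · -- continuity of g on Icc
        intro z hz
        exact ((hdg z (hU z hz)).continuousAt).continuousWithinAt

end Slope

/-- one non-stationary side piece for the van der Corput estimate -/
lemma side_piece (lam c : ℝ) (hl : 0 < lam) (B dl : ℝ) (hB : 0 ≤ B) (hdl : 0 < dl)
    (g g' : ℝ → ℂ) (hg : ∀ z, HasDerivAt g (g' z) z) (hg'c : Continuous g')
    (hgB : ∀ z, ‖g z‖ ≤ B) (hg'B : ∀ z, ‖g' z‖ ≤ B)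
    (a b : ℝ) (hab : a ≤ b) (hba : b - a ≤ 9)
    (hcase : (b ≤ -c/(2*lam) - dl) ∨ (-c/(2*lam) + dl ≤ a)) :
    ‖∫ z in a..b, Ef lam c z * g z‖ ≤ 12 * B / (2 * lam * dl) := by
  set zs : ℝ := -c/(2*lam) with hzs
  have hgc : Continuous g := by
    have : Differentiable ℝ g := fun z => (hg z).differentiableAt
    exact this.continuous
  have hpfz : ∀ z, pf lam c z = 2*lam*(z - zs) := by
    intro z; rw [hzs]; unfold pf; field_simp; ring
  -- separation from the critical point
  have hsep : ∀ z ∈ Set.Icc a b, 2*lam*dl ≤ |pf lam c z| := by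
    intro z hz
    rw [hpfz]
    rcases hcase with hc | hc
    · have h1 : z - zs ≤ -dl := by
        have := hz.2; simp only [hzs] at *; linarith
      rw [abs_mul, abs_of_pos (by positivity : (0:ℝ) < 2*lam)]
      have : dl ≤ |z - zs| := by rw [le_abs]; right; linarith
      nlinarith
    · have h1 : dl ≤ z - zs := by
        have := hz.1; simp only [hzs] at *; linarith
      rw [abs_mul, abs_of_pos (by positivity : (0:ℝ) < 2*lam)]
      have : dl ≤ |z - zs| := le_trans h1 (le_abs_self _)
      nlinarith
  have hne : ∀ z ∈ Set.Icc a b, pf lam c z ≠ 0 := by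
    intro z hz
    have := hsep z hz
    intro h0
    rw [h0, abs_zero] at this
    nlinarith
  have hzs_not : zs ∉ Set.Icc a b := by
    intro hzsin
    have := hsep zs hzsin
    rw [hpfz, sub_self, mul_zero, abs_zero] at this
    nlinarith
  -- the IBP
  set w : ℝ → ℂ := fun z => g' z * vf lam c z
      + (-(2*lam) * Complex.I) * ((g z * vf lam c z) * vf lam c z) with hw
  have hvcont : ContinuousOn (vf lam c) (Set.Icc a b) := vf_contOn lam c hne
  have hibp := ibp_core lam c a b hab g (fun z => g z * vf lam c z) w
      hne
      (fun z hz => by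
        have := (hg z).mul (vf_hasDerivAt lam c (hne z hz))
        exact this.congr_deriv (by rw [hw]; ring))
      (by
        apply ContinuousOn.add
        · exact hg'c.continuousOn.mul hvcont
        · exact continuousOn_const.mul ((hgc.continuousOn.mul hvcont).mul hvcont))
      (fun z hz => by
        have hpz := hne z hz
        have hIne : Complex.I * ((pf lam c z : ℝ) : ℂ) ≠ 0 := by
          simp [Complex.I_ne_zero, Complex.ofReal_eq_zero, hpz]
        have hpc : ((pf lam c z : ℝ) : ℂ) ≠ 0 := by exact_mod_cast hpz
        unfold vf
        field_simp)
      hgc.continuousOn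
  -- bounds on the boundary terms
  have hvb : ∀ z ∈ Set.Icc a b, ‖vf lam c z‖ ≤ (2*lam*dl)⁻¹ := by
    intro z hz
    rw [vf_norm]
    exact inv_anti₀ (by positivity) (hsep z hz)
  have hub : ∀ z ∈ Set.Icc a b, ‖g z * vf lam c z‖ ≤ B * (2*lam*dl)⁻¹ := by
    intro z hz
    rw [norm_mul]
    exact mul_le_mul (hgB z) (hvb z hz) (norm_nonneg _) hB
  -- pointwise bound on w
  have hwb : ∀ z ∈ Set.Icc a b, ‖w z‖ ≤ B * (2*lam*dl)⁻¹ + B * ((2*lam)⁻¹ * ((z - zs)^2)⁻¹) := by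
    intro z hz
    rw [hw]
    refine (norm_add_le _ _).trans (add_le_add ?_ ?_)
    · rw [norm_mul]
      exact mul_le_mul (hg'B z) (hvb z hz) (norm_nonneg _) hB
    · have hnrm : ‖(-(2*lam) * Complex.I : ℂ)‖ = 2 * lam := by
        simp [norm_mul, abs_of_pos hl]
      rw [norm_mul, hnrm, norm_mul, norm_mul]
      have hv2 : ‖vf lam c z‖ = |pf lam c z|⁻¹ := vf_norm lam c
      have hpabs : |pf lam c z| = 2*lam*|z - zs| := by
        rw [hpfz, abs_mul, abs_of_pos (by positivity : (0:ℝ) < 2*lam)]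
      have hzne : z - zs ≠ 0 := by
        intro h0
        have : z = zs := by linarith [sub_eq_zero.mp h0]
        exact hzs_not (this ▸ hz)
      calc 2*lam * (‖g z‖ * ‖vf lam c z‖ * ‖vf lam c z‖)
          ≤ 2*lam * (B * |pf lam c z|⁻¹ * |pf lam c z|⁻¹) := by
            rw [hv2]
            gcongr
            exact hgB z
        _ = B * ((2*lam)⁻¹ * ((z - zs)^2)⁻¹) := by
            have h3 : |z - zs| * |z - zs| = (z - zs)^2 := by
              rw [abs_mul_abs_self, sq]
            obtain ⟨t, ht⟩ : ∃ t, |z - zs| = t := ⟨_, rfl⟩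
            rw [hpabs, ← h3, ht]
            have hx : t ≠ 0 := by rw [← ht]; simpa using hzne
            have h2l : (2*lam) ≠ 0 := by positivity
            field_simp
  -- FTC for the quadratic tail
  have hFTC : ∫ z in a..b, ((z - zs)^2)⁻¹ = -(b - zs)⁻¹ - (-(a - zs)⁻¹) := by
    apply intervalIntegral.integral_eq_sub_of_hasDerivAt
    · intro z hz
      rw [Set.uIcc_of_le hab] at hz
      have hzne : z - zs ≠ 0 := by
        intro h0
        exact hzs_not ((sub_eq_zero.mp h0) ▸ hz)
      have h1 : HasDerivAt (fun z : ℝ => z - zs) 1 z := (hasDerivAt_id z).sub_const zs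
      have h2 := (h1.inv hzne).neg
      exact h2.congr_deriv (by field_simp)
    · apply ContinuousOn.intervalIntegrable
      apply ContinuousOn.inv₀
      · fun_prop
      · intro z hz
        rw [Set.uIcc_of_le hab] at hz
        intro h0
        have hzne : z - zs = 0 := by
          nlinarith [sq_nonneg (z - zs), pow_eq_zero_iff (n := 2) (two_ne_zero) |>.mp h0]
        exact hzs_not ((sub_eq_zero.mp hzne) ▸ hz)
  have hFTCb : -(b - zs)⁻¹ - (-(a - zs)⁻¹) ≤ dl⁻¹ := by
    rcases hcase with hc | hc
    · have h1 : b - zs ≤ -dl := by simp only [hzs] at *; linarith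
      have h2 : a - zs ≤ -dl := by simp only [hzs] at *; linarith
      have h3 : -(b-zs)⁻¹ ≤ dl⁻¹ := by
        rw [← inv_neg]
        apply inv_anti₀ hdl
        linarith
      have h4 : (0:ℝ) ≤ -(a - zs)⁻¹ := by
        rw [← inv_neg]
        have hpos : (0:ℝ) < -(a - zs) := by linarith
        positivity
      linarith
    · have h1 : dl ≤ a - zs := by simp only [hzs] at *; linarith
      have h2 : dl ≤ b - zs := by simp only [hzs] at *; linarith
      have h3 : -(b-zs)⁻¹ ≤ 0 := by
        have hpos : (0:ℝ) < b - zs := by linarith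
        have : (0:ℝ) < (b - zs)⁻¹ := by positivity
        linarith
      have h4 : (a - zs)⁻¹ ≤ dl⁻¹ := inv_anti₀ hdl h1
      linarith
  -- assemble
  rw [hibp]
  have hEwint : ∀ z ∈ Set.Icc a b, ‖Ef lam c z * w z‖ = ‖w z‖ := by
    intro z _; rw [norm_mul, Ef_norm, one_mul]
  have hwcont : ContinuousOn w (Set.Icc a b) := by
    apply ContinuousOn.add
    · exact hg'c.continuousOn.mul hvcont
    · exact continuousOn_const.mul ((hgc.continuousOn.mul hvcont).mul hvcont)
  have hintw : IntervalIntegrable (fun z => ‖Ef lam c z * w z‖) volume a b := by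
    apply ContinuousOn.intervalIntegrable
    rw [Set.uIcc_of_le hab]
    exact (((Ef_cont lam c).continuousOn.mul hwcont)).norm
  have hintM : IntervalIntegrable
      (fun z => B * (2*lam*dl)⁻¹ + B * ((2*lam)⁻¹ * ((z - zs)^2)⁻¹)) volume a b := by
    apply ContinuousOn.intervalIntegrable
    rw [Set.uIcc_of_le hab]
    apply ContinuousOn.add continuousOn_const
    apply ContinuousOn.mul continuousOn_const
    apply ContinuousOn.mul continuousOn_const
    apply ContinuousOn.inv₀
    · fun_prop
    · intro z hz h0
      have hzne : z - zs = 0 := by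
        nlinarith [pow_eq_zero_iff (n := 2) (two_ne_zero) |>.mp h0]
      exact hzs_not ((sub_eq_zero.mp hzne) ▸ hz)
  have hnormint : ‖∫ z in a..b, Ef lam c z * w z‖
      ≤ ∫ z in a..b, (B * (2*lam*dl)⁻¹ + B * ((2*lam)⁻¹ * ((z - zs)^2)⁻¹)) := by
    calc ‖∫ z in a..b, Ef lam c z * w z‖ ≤ ∫ z in a..b, ‖Ef lam c z * w z‖ :=
          intervalIntegral.norm_integral_le_integral_norm hab
      _ ≤ _ := by
          apply intervalIntegral.integral_mono_on hab hintw hintM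
          intro z hz
          rw [hEwint z hz]
          exact hwb z hz
  have hintval : ∫ z in a..b, (B * (2*lam*dl)⁻¹ + B * ((2*lam)⁻¹ * ((z - zs)^2)⁻¹))
      ≤ 9 * (B * (2*lam*dl)⁻¹) + B * ((2*lam)⁻¹ * dl⁻¹) := by
    have hint2 : IntervalIntegrable (fun z : ℝ => ((z - zs)^2)⁻¹) volume a b := by
      apply ContinuousOn.intervalIntegrable
      rw [Set.uIcc_of_le hab]
      apply ContinuousOn.inv₀
      · fun_prop
      · intro z hz h0
        have hzne : z - zs = 0 := by
          nlinarith [pow_eq_zero_iff (n := 2) (two_ne_zero) |>.mp h0]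
        exact hzs_not ((sub_eq_zero.mp hzne) ▸ hz)
    rw [intervalIntegral.integral_add (intervalIntegrable_const)
      ((hint2.const_mul _).const_mul B)]
    rw [intervalIntegral.integral_const]
    rw [intervalIntegral.integral_const_mul, intervalIntegral.integral_const_mul, hFTC]
    have hterm1 : (b - a) • (B * (2*lam*dl)⁻¹) ≤ 9 * (B * (2*lam*dl)⁻¹) := by
      rw [smul_eq_mul]
      have : (0:ℝ) ≤ B * (2*lam*dl)⁻¹ := by positivity
      nlinarith
    have hterm2 : B * ((2*lam)⁻¹ * (-(b - zs)⁻¹ - (-(a - zs)⁻¹))) ≤ B * ((2*lam)⁻¹ * dl⁻¹) := by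
      apply mul_le_mul_of_nonneg_left _ hB
      apply mul_le_mul_of_nonneg_left hFTCb (by positivity)
    linarith
  -- final assembly
  have hbdy : ∀ x ∈ Set.Icc a b, ‖Ef lam c x * (g x * vf lam c x)‖ ≤ B * (2*lam*dl)⁻¹ := by
    intro x hx
    rw [norm_mul, Ef_norm, one_mul]
    exact hub x hx
  have hain : a ∈ Set.Icc a b := ⟨le_refl a, hab⟩
  have hbin : b ∈ Set.Icc a b := ⟨hab, le_refl b⟩
  calc ‖Ef lam c b * (g b * vf lam c b) - Ef lam c a * (g a * vf lam c a)
        - ∫ z in a..b, Ef lam c z * w z‖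
      ≤ ‖Ef lam c b * (g b * vf lam c b)‖ + ‖Ef lam c a * (g a * vf lam c a)‖
        + ‖∫ z in a..b, Ef lam c z * w z‖ := by
        refine (norm_sub_le _ _).trans (add_le_add ?_ (le_refl _))
        exact norm_sub_le _ _
    _ ≤ B * (2*lam*dl)⁻¹ + B * (2*lam*dl)⁻¹
        + (9 * (B * (2*lam*dl)⁻¹) + B * ((2*lam)⁻¹ * dl⁻¹)) := by
        refine add_le_add (add_le_add (hbdy b hbin) (hbdy a hain)) ?_
        exact hnormint.trans hintval
    _ ≤ 12 * B / (2 * lam * dl) := by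
        rw [div_eq_mul_inv]
        have e : (2*lam)⁻¹ * dl⁻¹ = (2*lam*dl)⁻¹ := (mul_inv (2*lam) dl).symm
        rw [e]
        nlinarith [mul_nonneg hB (by positivity : (0:ℝ) ≤ (2*lam*dl)⁻¹)]



/-- van der Corput bound -/
lemma regime2 (lam c : ℝ) (hlam : 1 < lam) (B : ℝ) (hB : 0 ≤ B)
    (g g' : ℝ → ℂ) (hg : ∀ z, HasDerivAt g (g' z) z) (hg'c : Continuous g')
    (hgB : ∀ z, ‖g z‖ ≤ B) (hg'B : ∀ z, ‖g' z‖ ≤ B) :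
    ‖∫ z in (1/10:ℝ)..9, Ef lam c z * g z‖ ≤ 20 * B / Real.sqrt lam := by
  have hl : (0:ℝ) < lam := lt_trans one_pos hlam
  set sq : ℝ := Real.sqrt lam with hsqdef
  have hsq : 0 < sq := Real.sqrt_pos.mpr hl
  have hsqsq : sq * sq = lam := Real.mul_self_sqrt hl.le
  set dl : ℝ := sq⁻¹ with hdldef
  have hdl : 0 < dl := by positivity
  set zs : ℝ := -c/(2*lam) with hzsdef
  set c₁ : ℝ := max (1/10) (min (zs - dl) 9) with hc₁def
  set c₂ : ℝ := max (1/10) (min (zs + dl) 9) with hc₂def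
  have h1c₁ : (1/10:ℝ) ≤ c₁ := le_max_left _ _
  have h1c₂ : (1/10:ℝ) ≤ c₂ := le_max_left _ _
  have hc₁9 : c₁ ≤ 9 := max_le (by norm_num) (min_le_right _ _)
  have hc₂9 : c₂ ≤ 9 := max_le (by norm_num) (min_le_right _ _)
  have hc₁₂ : c₁ ≤ c₂ := by
    apply max_le_max (le_refl _)
    apply min_le_min _ (le_refl _)
    linarith
  have hc2le : c₂ - c₁ ≤ 2*dl := by
    have h1 : min (zs+dl) 9 ≤ min (zs-dl) 9 + 2*dl := by
      rcases min_cases (zs-dl) 9 with ⟨h,h'⟩|⟨h,h'⟩ <;>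
        rcases min_cases (zs+dl) 9 with ⟨k,k'⟩|⟨k,k'⟩ <;> linarith
    have h2 : c₂ ≤ c₁ + 2*dl := by
      apply max_le
      · linarith [le_max_left (1/10:ℝ) (min (zs - dl) 9)]
      · calc min (zs+dl) 9 ≤ min (zs-dl) 9 + 2*dl := h1
          _ ≤ c₁ + 2*dl := by
              linarith [le_max_right (1/10:ℝ) (min (zs - dl) 9)]
    linarith
  have hgc : Continuous g := by
    have : Differentiable ℝ g := fun z => (hg z).differentiableAt
    exact this.continuous
  have hcont : Continuous (fun z => Ef lam c z * g z) := (Ef_cont lam c).mul hgc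
  have e1 := intervalIntegral.integral_add_adjacent_intervals
    (a := (1/10:ℝ)) (b := c₁) (c := c₂)
    (hcont.intervalIntegrable _ _) (hcont.intervalIntegrable _ _)
    (f := fun z => Ef lam c z * g z) (μ := volume)
  have e2 := intervalIntegral.integral_add_adjacent_intervals
    (a := (1/10:ℝ)) (b := c₂) (c := 9)
    (hcont.intervalIntegrable _ _) (hcont.intervalIntegrable _ _)
    (f := fun z => Ef lam c z * g z) (μ := volume)
  have hsplit : ∫ z in (1/10:ℝ)..9, Ef lam c z * g z
      = ((∫ z in (1/10:ℝ)..c₁, Ef lam c z * g z) + ∫ z in c₁..c₂, Ef lam c z * g z)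
        + ∫ z in c₂..9, Ef lam c z * g z := by
    rw [e1, e2]
  have hleft : ‖∫ z in (1/10:ℝ)..c₁, Ef lam c z * g z‖ ≤ 12 * B / (2 * lam * dl) := by
    by_cases hL : zs - dl ≤ 1/10
    · have hmin : min (zs - dl) 9 ≤ (1/10:ℝ) := le_trans (min_le_left _ _) hL
      have : c₁ = 1/10 := max_eq_left hmin
      rw [this, intervalIntegral.integral_same, norm_zero]
      positivity
    · push_neg at hL
      have hc₁zs : c₁ ≤ zs - dl := max_le (le_of_lt hL) (min_le_left _ _)
      exact side_piece lam c hl B dl hB hdl g g' hg hg'c hgB hg'B (1/10) c₁ h1c₁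
        (by linarith) (Or.inl (by rw [← hzsdef]; linarith))
  have hright : ‖∫ z in c₂..9, Ef lam c z * g z‖ ≤ 12 * B / (2 * lam * dl) := by
    by_cases hR : 9 ≤ zs + dl
    · have hmin : min (zs + dl) 9 = (9:ℝ) := min_eq_right hR
      have : c₂ = 9 := by rw [hc₂def, hmin]; exact max_eq_right (by norm_num)
      rw [this, intervalIntegral.integral_same, norm_zero]
      positivity
    · push_neg at hR
      have hmin : min (zs + dl) 9 = zs + dl := min_eq_left (le_of_lt hR)
      have hc₂zs : zs + dl ≤ c₂ := by
        rw [hc₂def, hmin]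
        exact le_max_right _ _
      exact side_piece lam c hl B dl hB hdl g g' hg hg'c hgB hg'B c₂ 9 hc₂9
        (by linarith) (Or.inr (by rw [← hzsdef]; linarith))
  have hmid : ‖∫ z in c₁..c₂, Ef lam c z * g z‖ ≤ B * (2*dl) := by
    have hbd : ∀ z ∈ Set.uIoc c₁ c₂, ‖Ef lam c z * g z‖ ≤ B := by
      intro z _
      rw [norm_mul, Ef_norm, one_mul]
      exact hgB z
    calc ‖∫ z in c₁..c₂, Ef lam c z * g z‖ ≤ B * |c₂ - c₁| :=
          intervalIntegral.norm_integral_le_of_norm_le_const hbd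
      _ ≤ B * (2*dl) := by
          rw [_root_.abs_of_nonneg (by linarith : (0:ℝ) ≤ c₂ - c₁)]
          exact mul_le_mul_of_nonneg_left hc2le hB
  rw [hsplit]
  have htot : ‖((∫ z in (1/10:ℝ)..c₁, Ef lam c z * g z) + ∫ z in c₁..c₂, Ef lam c z * g z)
        + ∫ z in c₂..9, Ef lam c z * g z‖
      ≤ 12 * B / (2 * lam * dl) + B * (2*dl) + 12 * B / (2 * lam * dl) := by
    refine (norm_add_le _ _).trans (add_le_add ((norm_add_le _ _).trans ?_) hright)
    exact add_le_add hleft hmid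
  refine htot.trans ?_
  have hlamdl : lam * dl = sq := by
    rw [hdldef]
    field_simp
    linarith [hsqsq]
  have e3 : 12 * B / (2 * lam * dl) = 6 * B / sq := by
    rw [mul_assoc, hlamdl]
    rw [div_eq_div_iff (by positivity) (by positivity)]
    ring
  have e4 : B * (2 * dl) = 2 * B / sq := by
    rw [hdldef]
    field_simp
  rw [e3, e4]
  rw [← add_div, ← add_div, div_le_div_iff₀ (by positivity) (by positivity)]
  nlinarith [mul_nonneg hB hsq.le]


/-! ### Application layer -/

lemma iteratedDeriv_support {g : ℝ → ℂ} (hsupp : ∀ z, z ∉ Set.Icc (1/8:ℝ) 8 → g z = 0) :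
    ∀ (k : ℕ) (z : ℝ), z ∉ Set.Icc (1/8:ℝ) 8 → iteratedDeriv k g z = 0 := by
  intro k
  induction k with
  | zero => simpa using hsupp
  | succ k ih =>
      intro z hz
      rw [iteratedDeriv_succ]
      have hop : IsOpen (Set.Icc (1/8:ℝ) 8)ᶜ := isClosed_Icc.isOpen_compl
      have hev : iteratedDeriv k g =ᶠ[nhds z] (fun _ => 0) :=
        Filter.eventuallyEq_of_mem (hop.mem_nhds hz) (fun y hy => ih y hy)
      rw [hev.deriv_eq]
      simp

lemma adm_of_contDiff (lam c : ℝ) (g : ℝ → ℂ) (hg : ContDiff ℝ (⊤ : ℕ∞) g)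
    (hsupp : ∀ z, z ∉ Set.Icc (1/8:ℝ) 8 → g z = 0)
    (B : ℝ) (hbd : ∀ i, i ≤ 10 → ∀ z, ‖iteratedDeriv i g z‖ ≤ B) :
    Adm lam c 10 B g := by
  suffices h : ∀ n k, k + n ≤ 10 → Adm lam c n B (iteratedDeriv k g) by
    simpa using h 10 0 (by norm_num)
  intro n
  induction n with
  | zero =>
      intro k hk
      exact ⟨iteratedDeriv_support hsupp k, hbd k (by omega)⟩
  | succ n ih =>
      intro k hk
      refine ⟨⟨iteratedDeriv_support hsupp k, hbd k (by omega)⟩,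
        iteratedDeriv (k+1) g, ?_, ?_, ?_⟩
      · intro z _
        have hdiff : DifferentiableAt ℝ (iteratedDeriv k g) z := by
          have := hg.differentiable_iteratedDeriv k (by exact_mod_cast WithTop.coe_lt_top _)
          exact this.differentiableAt
        rw [iteratedDeriv_succ]
        exact hdiff.hasDerivAt
      · exact (hg.continuous_iteratedDeriv (k+1) (by exact_mod_cast le_top)).continuousOn
      · exact ih (k+1) (by omega)

lemma iota_bound : ∀ (i : ℕ) (x : ℝ), x ∈ Set.Icc (1/8:ℝ) 8 →
    ‖iteratedDeriv i (fun z : ℝ => (z:ℂ)) x‖ ≤ 8 := by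
  have hd1 : deriv (fun z : ℝ => (z:ℂ)) = fun _ => (1:ℂ) := by
    funext x
    have h : HasDerivAt (fun z : ℝ => (z:ℂ)) 1 x := by
      exact ((hasDerivAt_id x).ofReal_comp).congr_deriv Complex.ofReal_one
    exact h.deriv
  have hconst : ∀ m : ℕ, iteratedDeriv (m+1) (fun _ : ℝ => (1:ℂ)) = fun _ => 0 := by
    intro m
    induction m with
    | zero => funext x; rw [iteratedDeriv_one]; simp
    | succ m ih => funext x; rw [iteratedDeriv_succ, ih]; simp
  intro i
  match i with
  | 0 =>
      intro x hx
      rw [iteratedDeriv_zero]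
      rw [Complex.norm_real]
      rw [Real.norm_eq_abs, abs_le]
      constructor <;> [linarith [hx.1]; exact hx.2]
  | 1 =>
      intro x _
      rw [iteratedDeriv_one, hd1]
      norm_num
  | (k+2) =>
      intro x _
      rw [iteratedDeriv_succ', hd1, hconst k]
      norm_num

lemma psi_alpha_bound (A α : ℝ) (hA : 0 < A) (hα : α ∈ Set.Icc (1/4:ℝ) 4)
    (ψ₂ : ℝ → ℂ) (hψ₂ : ContDiff ℝ (⊤ : ℕ∞) ψ₂)
    (hb₂ : ∀ i : ℕ, i ≤ 10 → ∀ x : ℝ, ‖iteratedDeriv i ψ₂ x‖ ≤ A) :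
    ∀ i : ℕ, i ≤ 10 → ∀ x : ℝ, ‖iteratedDeriv i (fun z => ψ₂ (α * z)) x‖ ≤ 4^10 * A := by
  intro i hi x
  have hcd : ContDiff ℝ i ψ₂ := hψ₂.of_le (by exact_mod_cast le_top)
  have := congrFun (iteratedDeriv_comp_const_smul hcd α) x
  rw [this]
  rw [norm_smul]
  have hαa : |α| ≤ 4 := abs_le.mpr ⟨by linarith [hα.1], hα.2⟩
  have h1 : ‖α ^ i‖ ≤ 4 ^ 10 := by
    rw [Real.norm_eq_abs, _root_.abs_pow]
    calc |α| ^ i ≤ 4 ^ i := pow_le_pow_left₀ (abs_nonneg α) hαa i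
      _ ≤ 4 ^ 10 := pow_le_pow_right₀ (by norm_num) hi
  exact mul_le_mul h1 (hb₂ i hi _) (norm_nonneg _) (by norm_num)

lemma g_bounds (A α : ℝ) (hA : 0 < A) (hα : α ∈ Set.Icc (1/4:ℝ) 4)
    (ψ₁ ψ₂ : ℝ → ℂ) (hψ₁ : ContDiff ℝ (⊤ : ℕ∞) ψ₁) (hψ₂ : ContDiff ℝ (⊤ : ℕ∞) ψ₂)
    (hs₁ : ∀ x : ℝ, x ∉ Set.Icc (1/8 : ℝ) 8 → ψ₁ x = 0)
    (hb₁ : ∀ i : ℕ, i ≤ 10 → ∀ x : ℝ, ‖iteratedDeriv i ψ₁ x‖ ≤ A)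
    (hb₂ : ∀ i : ℕ, i ≤ 10 → ∀ x : ℝ, ‖iteratedDeriv i ψ₂ x‖ ≤ A) :
    ∀ i : ℕ, i ≤ 10 → ∀ z : ℝ,
      ‖iteratedDeriv i (fun z => ψ₁ z * ψ₂ (α * z) * (z:ℂ)) z‖
        ≤ 2^10 * (A * (2^10 * (4^10 * A * 8))) := by
  have hι : ContDiff ℝ (⊤ : ℕ∞) (fun z : ℝ => (z:ℂ)) := Complex.ofRealCLM.contDiff
  have hψα : ContDiff ℝ (⊤ : ℕ∞) (fun z => ψ₂ (α * z)) :=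
    hψ₂.comp (contDiff_const.mul contDiff_id)
  have hh : ContDiff ℝ (⊤ : ℕ∞) (fun z => ψ₂ (α * z) * (z:ℂ)) := hψα.mul hι
  have hg : ContDiff ℝ (⊤ : ℕ∞) (fun z => ψ₁ z * (ψ₂ (α * z) * (z:ℂ))) := hψ₁.mul hh
  have hψαb := psi_alpha_bound A α hA hα ψ₂ hψ₂ hb₂
  -- bound for h on Icc
  have hhb : ∀ n : ℕ, n ≤ 10 → ∀ x ∈ Set.Icc (1/8:ℝ) 8,
      ‖iteratedDeriv n (fun z => ψ₂ (α * z) * (z:ℂ)) x‖ ≤ 2^10 * (4^10 * A * 8) := by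
    intro n hn x hx
    rw [← norm_iteratedFDeriv_eq_norm_iteratedDeriv]
    calc ‖iteratedFDeriv ℝ n (fun z => ψ₂ (α * z) * (z:ℂ)) x‖
        ≤ ∑ i ∈ Finset.range (n + 1), (n.choose i : ℝ)
            * ‖iteratedFDeriv ℝ i (fun z => ψ₂ (α * z)) x‖
            * ‖iteratedFDeriv ℝ (n - i) (fun z : ℝ => (z:ℂ)) x‖ :=
          norm_iteratedFDeriv_mul_le hψα hι x (by exact_mod_cast le_top)
      _ ≤ ∑ i ∈ Finset.range (n + 1), (n.choose i : ℝ) * (4^10 * A) * 8 := by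
          apply Finset.sum_le_sum
          intro i hi
          have hi' : i ≤ 10 := by
            have := Finset.mem_range.mp hi; omega
          have hni : n - i ≤ 10 := by omega
          rw [norm_iteratedFDeriv_eq_norm_iteratedDeriv,
            norm_iteratedFDeriv_eq_norm_iteratedDeriv]
          have t1 := hψαb i hi' x
          have t2 := iota_bound (n - i) x hx
          have hc : (0:ℝ) ≤ (n.choose i : ℝ) := Nat.cast_nonneg _
          exact mul_le_mul (mul_le_mul_of_nonneg_left t1 hc) t2 (norm_nonneg _) (by positivity)
      _ ≤ 2^10 * (4^10 * A * 8) := by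
          rw [← Finset.sum_mul, ← Finset.sum_mul]
          have hsum : ∑ i ∈ Finset.range (n + 1), (n.choose i : ℝ) = 2^n := by
            rw [← Nat.cast_sum]
            rw [Nat.sum_range_choose]
            push_cast
            ring
          rw [hsum, mul_assoc]
          apply mul_le_mul_of_nonneg_right _ (by positivity)
          apply pow_le_pow_right₀ (by norm_num) hn
  -- bound for g on Icc, then globally
  have hmain : ∀ n : ℕ, n ≤ 10 → ∀ x ∈ Set.Icc (1/8:ℝ) 8,
      ‖iteratedDeriv n (fun z => ψ₁ z * (ψ₂ (α * z) * (z:ℂ))) x‖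
        ≤ 2^10 * (A * (2^10 * (4^10 * A * 8))) := by
    intro n hn x hx
    rw [← norm_iteratedFDeriv_eq_norm_iteratedDeriv]
    calc ‖iteratedFDeriv ℝ n (fun z => ψ₁ z * (ψ₂ (α * z) * (z:ℂ))) x‖
        ≤ ∑ i ∈ Finset.range (n + 1), (n.choose i : ℝ)
            * ‖iteratedFDeriv ℝ i ψ₁ x‖
            * ‖iteratedFDeriv ℝ (n - i) (fun z => ψ₂ (α * z) * (z:ℂ)) x‖ :=
          norm_iteratedFDeriv_mul_le hψ₁ hh x (by exact_mod_cast le_top)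
      _ ≤ ∑ i ∈ Finset.range (n + 1), (n.choose i : ℝ) * A * (2^10 * (4^10 * A * 8)) := by
          apply Finset.sum_le_sum
          intro i hi
          have hi' : i ≤ 10 := by
            have := Finset.mem_range.mp hi; omega
          have hni : n - i ≤ 10 := by omega
          rw [norm_iteratedFDeriv_eq_norm_iteratedDeriv,
            norm_iteratedFDeriv_eq_norm_iteratedDeriv]
          have t1 := hb₁ i hi' x
          have t2 := hhb (n - i) hni x hx
          have hc : (0:ℝ) ≤ (n.choose i : ℝ) := Nat.cast_nonneg _
          exact mul_le_mul (mul_le_mul_of_nonneg_left t1 hc) t2 (norm_nonneg _) (by positivity)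
      _ ≤ 2^10 * (A * (2^10 * (4^10 * A * 8))) := by
          rw [← Finset.sum_mul, ← Finset.sum_mul]
          have hsum : ∑ i ∈ Finset.range (n + 1), (n.choose i : ℝ) = 2^n := by
            rw [← Nat.cast_sum, Nat.sum_range_choose]
            push_cast
            ring
          rw [hsum, mul_assoc]
          apply mul_le_mul_of_nonneg_right _ (by positivity)
          apply pow_le_pow_right₀ (by norm_num) hn
  intro i hi z
  have heq : (fun z => ψ₁ z * ψ₂ (α * z) * (z:ℂ))
      = (fun z => ψ₁ z * (ψ₂ (α * z) * (z:ℂ))) := by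
    funext z; ring
  rw [heq]
  by_cases hz : z ∈ Set.Icc (1/8:ℝ) 8
  · exact hmain i hi z hz
  · have hzero : ∀ y, y ∉ Set.Icc (1/8:ℝ) 8 → ψ₁ y * (ψ₂ (α * y) * (y:ℂ)) = 0 := by
      intro y hy; rw [hs₁ y hy, zero_mul]
    rw [iteratedDeriv_support hzero i z hz]
    rw [norm_zero]
    positivity

end OscAux

open OscAux in
/-- Stationary/non-stationary phase bounds for the oscillatory integral
`I(s) = 2^{j+2} |∫₀^∞ e^{i(β2^j z + s2^{2j} z²)} ψ₁(z) ψ₂(αz) z dz|`. -/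
theorem oscillatory_integral_bounds (A : ℝ) (hA : 0 < A) :
    ∃ C : ℝ, 0 < C ∧
      ∀ j : ℕ, 1 ≤ j → ∀ ψ₁ ψ₂ : ℝ → ℂ,
        ContDiff ℝ (⊤ : ℕ∞) ψ₁ → ContDiff ℝ (⊤ : ℕ∞) ψ₂ →
        (∀ x : ℝ, x ∉ Set.Icc (1/8 : ℝ) 8 → ψ₁ x = 0) →
        (∀ x : ℝ, x ∉ Set.Icc (1/8 : ℝ) 8 → ψ₂ x = 0) →
        (∀ i : ℕ, i ≤ 10 → ∀ x : ℝ, ‖iteratedDeriv i ψ₁ x‖ ≤ A) →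
        (∀ i : ℕ, i ≤ 10 → ∀ x : ℝ, ‖iteratedDeriv i ψ₂ x‖ ≤ A) →
        ∀ α : ℝ, α ∈ Set.Icc (1/4 : ℝ) 4 →
        ∀ β : ℝ, β ∈ ({1 + α, 1 - α, -1 + α, -1 - α} : Set ℝ) →
        ∀ s : ℝ, 0 < s →
          (s ≤ ((2:ℝ) ^ (2 * j))⁻¹ →
            (2:ℝ) ^ (j + 2) *
                ‖∫ z in Set.Ioi (0:ℝ),
                    Complex.exp (Complex.I * ((β * 2 ^ j * z + s * 2 ^ (2 * j) * z ^ 2 : ℝ) : ℂ)) *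
                      ψ₁ z * ψ₂ (α * z) * (z : ℂ)‖
              ≤ C * (2:ℝ) ^ j) ∧
          (((2:ℝ) ^ (2 * j))⁻¹ < s → s ≤ 40 * ((2:ℝ) ^ j)⁻¹ →
            (2:ℝ) ^ (j + 2) *
                ‖∫ z in Set.Ioi (0:ℝ),
                    Complex.exp (Complex.I * ((β * 2 ^ j * z + s * 2 ^ (2 * j) * z ^ 2 : ℝ) : ℂ)) *
                      ψ₁ z * ψ₂ (α * z) * (z : ℂ)‖
              ≤ C * s ^ (-(1/2) : ℝ)) ∧
          (40 * ((2:ℝ) ^ j)⁻¹ < s →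
            (2:ℝ) ^ (j + 2) *
                ‖∫ z in Set.Ioi (0:ℝ),
                    Complex.exp (Complex.I * ((β * 2 ^ j * z + s * 2 ^ (2 * j) * z ^ 2 : ℝ) : ℂ)) *
                      ψ₁ z * ψ₂ (α * z) * (z : ℂ)‖
              ≤ C * (2:ℝ) ^ j * ((2:ℝ) ^ (2 * j) * s) ^ (-(10:ℝ))) := by
  have hBg : (0:ℝ) < 2^10 * (A * (2^10 * (4^10 * A * 8))) := by positivity
  set Bg : ℝ := 2^10 * (A * (2^10 * (4^10 * A * 8))) with hBgdef
  have hKK : (0:ℝ) < Kf 10 := Kf_pos 10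
  refine ⟨36 * Bg + 80 * Bg + 36 * Bg * (Kf 10)^10, by positivity, ?_⟩
  intro j hj ψ₁ ψ₂ hψ₁ hψ₂ hs₁ hs₂ hb₁ hb₂ α hα β hβ s hs
  set lam : ℝ := s * 2^(2*j) with hlamdef
  set c : ℝ := β * 2^j with hcdef
  set g : ℝ → ℂ := fun z => ψ₁ z * ψ₂ (α * z) * (z:ℂ) with hgdef
  have h2j : (0:ℝ) < 2^j := by positivity
  have h2jj : ((2:ℝ)^(2*j)) = ((2:ℝ)^j)^2 := by rw [mul_comm, pow_mul]
  have h2jpos : (0:ℝ) < 2^(2*j) := by positivity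
  have hlampos : 0 < lam := by rw [hlamdef]; positivity
  have hβ5 : |β| ≤ 5 := by
    have ha1 := hα.1; have ha2 := hα.2
    simp only [Set.mem_insert_iff, Set.mem_singleton_iff] at hβ
    rcases hβ with rfl|rfl|rfl|rfl <;> rw [abs_le] <;> constructor <;> linarith
  have hgcd : ContDiff ℝ (⊤ : ℕ∞) g := by
    rw [hgdef]
    exact (hψ₁.mul (hψ₂.comp (contDiff_const.mul contDiff_id))).mul
      Complex.ofRealCLM.contDiff
  have hsupp_g : ∀ z, z ∉ Set.Icc (1/8:ℝ) 8 → g z = 0 := by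
    intro z hz
    simp only [hgdef]
    rw [hs₁ z hz]
    simp
  have hbound : ∀ i : ℕ, i ≤ 10 → ∀ z : ℝ, ‖iteratedDeriv i g z‖ ≤ Bg := by
    have h := g_bounds A α hA hα ψ₁ ψ₂ hψ₁ hψ₂ hs₁ hb₁ hb₂
    intro i hi z
    rw [hgdef, hBgdef]
    exact h i hi z
  have hb0 : ∀ z, ‖g z‖ ≤ Bg := by
    intro z
    have := hbound 0 (by norm_num) z
    rwa [iteratedDeriv_zero] at this
  have hb1' : ∀ z, ‖deriv g z‖ ≤ Bg := by
    intro z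
    have := hbound 1 (by norm_num) z
    rwa [iteratedDeriv_one] at this
  -- rewrite the integral over `Ioi 0` as an interval integral
  have hfun : (fun z : ℝ =>
      Complex.exp (Complex.I * ((c * z + lam * z ^ 2 : ℝ) : ℂ)) * ψ₁ z * ψ₂ (α * z) * (z:ℂ))
      = fun z => Ef lam c z * g z := by
    funext z
    simp only [Ef, hgdef]
    ring
  have hint : (∫ z in Set.Ioi (0:ℝ),
      Complex.exp (Complex.I * ((c * z + lam * z ^ 2 : ℝ) : ℂ)) * ψ₁ z * ψ₂ (α * z) * (z:ℂ))
      = ∫ z in (1/10:ℝ)..9, Ef lam c z * g z := by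
    rw [hfun]
    have hzero : ∀ z, z ∉ Set.Icc (1/8:ℝ) 8 → Ef lam c z * g z = 0 := by
      intro z hz; rw [hsupp_g z hz, mul_zero]
    have h1 : (∫ z in Set.Ioi (0:ℝ), Ef lam c z * g z) = ∫ z, Ef lam c z * g z := by
      apply MeasureTheory.setIntegral_eq_integral_of_forall_compl_eq_zero
      intro z hz
      apply hzero
      intro hzin
      exact hz (by simp only [Set.mem_Ioi]; linarith [hzin.1])
    have h2 : (∫ z in Set.Ioc (1/10:ℝ) 9, Ef lam c z * g z) = ∫ z, Ef lam c z * g z := by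
      apply MeasureTheory.setIntegral_eq_integral_of_forall_compl_eq_zero
      intro z hz
      apply hzero
      intro hzin
      exact hz (by constructor <;> [linarith [hzin.1]; linarith [hzin.2]])
    rw [intervalIntegral.integral_of_le (by norm_num), h2, h1]
  have hpow : (2:ℝ)^(j+2) = 4 * 2^j := by rw [pow_add]; ring
  have hN0 : (0:ℝ) ≤ ‖∫ z in (1/10:ℝ)..9, Ef lam c z * g z‖ := norm_nonneg _
  refine ⟨?_, ?_, ?_⟩
  -- regime 1
  · intro _
    rw [hint, hpow]
    have htriv : ‖∫ z in (1/10:ℝ)..9, Ef lam c z * g z‖ ≤ 9 * Bg := by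
      have hbd : ∀ z ∈ Set.uIoc (1/10:ℝ) 9, ‖Ef lam c z * g z‖ ≤ Bg := by
        intro z _
        rw [norm_mul, Ef_norm, one_mul]
        exact hb0 z
      calc ‖∫ z in (1/10:ℝ)..9, Ef lam c z * g z‖ ≤ Bg * |(9:ℝ) - 1/10| :=
            intervalIntegral.norm_integral_le_of_norm_le_const hbd
        _ ≤ 9 * Bg := by
            rw [_root_.abs_of_nonneg (by norm_num : (0:ℝ) ≤ (9:ℝ) - 1/10)]
            nlinarith
    calc 4 * 2^j * ‖∫ z in (1/10:ℝ)..9, Ef lam c z * g z‖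
        ≤ 4 * 2^j * (9 * Bg) := by
          apply mul_le_mul_of_nonneg_left htriv (by positivity)
      _ = 36 * Bg * 2^j := by ring
      _ ≤ (36 * Bg + 80 * Bg + 36 * Bg * (Kf 10)^10) * 2^j := by
          have hpos : (0:ℝ) < 80 * Bg + 36 * Bg * (Kf 10)^10 := by positivity
          nlinarith
  -- regime 2
  · intro hs2a _
    rw [hint, hpow]
    have hlam1 : 1 < lam := by
      have := mul_lt_mul_of_pos_right hs2a h2jpos
      rwa [inv_mul_cancel₀ (ne_of_gt h2jpos), ← hlamdef] at this
    have hdg : ∀ z, HasDerivAt g (deriv g z) z := by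
      intro z
      exact ((hgcd.differentiable (by simp)).differentiableAt).hasDerivAt
    have hdgc : Continuous (deriv g) := by
      have := hgcd.continuous_iteratedDeriv 1 (by simp)
      rwa [iteratedDeriv_one] at this
    have happ := regime2 lam c hlam1 Bg hBg.le g (deriv g) hdg hdgc hb0 hb1'
    have hsqrt : Real.sqrt lam = Real.sqrt s * 2^j := by
      rw [hlamdef, Real.sqrt_mul hs.le, h2jj, Real.sqrt_sq h2j.le]
    have hsps : (0:ℝ) < Real.sqrt s := Real.sqrt_pos.mpr hs
    have hrpow : s ^ (-(1/2) : ℝ) = (Real.sqrt s)⁻¹ := by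
      rw [Real.rpow_neg hs.le, Real.sqrt_eq_rpow]
    rw [hrpow]
    calc 4 * 2^j * ‖∫ z in (1/10:ℝ)..9, Ef lam c z * g z‖
        ≤ 4 * 2^j * (20 * Bg / Real.sqrt lam) := by
          apply mul_le_mul_of_nonneg_left happ (by positivity)
      _ = 80 * Bg * (Real.sqrt s)⁻¹ := by
          rw [hsqrt]
          field_simp
          ring
      _ ≤ (36 * Bg + 80 * Bg + 36 * Bg * (Kf 10)^10) * (Real.sqrt s)⁻¹ := by
          apply mul_le_mul_of_nonneg_right _ (by positivity)
          nlinarith [pow_pos hKK 10]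
  -- regime 3
  · intro hs3
    rw [hint, hpow]
    have hlam40 : 40 * 2^j < lam := by
      have := mul_lt_mul_of_pos_right hs3 h2jpos
      rw [← hlamdef] at this
      have he : 40 * ((2:ℝ)^j)⁻¹ * 2^(2*j) = 40 * 2^j := by
        rw [h2jj]
        field_simp
      rwa [he] at this
    have hlam1 : 1 ≤ lam := by
      have h2jge : (2:ℝ) ≤ 2^j := by
        calc (2:ℝ) = 2^1 := by norm_num
          _ ≤ 2^j := pow_le_pow_right₀ (by norm_num) hj
      nlinarith
    have hcge : -(5 * 2^j) ≤ c := by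
      rw [hcdef]
      have := (abs_le.mp hβ5).1
      nlinarith
    have hslope : ∀ z ∈ Set.Icc (1/8:ℝ) 8, lam / 8 ≤ pf lam c z := by
      intro z hz
      have hz1 := hz.1
      have : 2 * lam * (1/8) ≤ 2 * lam * z :=
        mul_le_mul_of_nonneg_left hz1 (by positivity)
      unfold pf
      linarith
    have hU : ∀ z ∈ Set.Icc (1/10:ℝ) 9, 0 < pf lam c z := by
      intro z hz
      have hz1 := hz.1
      have : 2 * lam * (1/10) ≤ 2 * lam * z :=
        mul_le_mul_of_nonneg_left hz1 (by positivity)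
      unfold pf
      linarith
    have hAdm : Adm lam c 10 Bg g :=
      adm_of_contDiff lam c g hgcd hsupp_g Bg hbound
    have happ := regime3 hlam1 hslope hU 10 Bg g hBg.le hAdm
    have hx : (2:ℝ)^(2*j) * s = lam := by rw [hlamdef]; ring
    have hrpow : ((2:ℝ)^(2*j) * s) ^ (-(10:ℝ)) = (lam^(10:ℕ))⁻¹ := by
      rw [hx, show (-(10:ℝ)) = -((10:ℕ):ℝ) by norm_num, Real.rpow_neg hlampos.le,
        Real.rpow_natCast]
    rw [hrpow]
    calc 4 * 2^j * ‖∫ z in (1/10:ℝ)..9, Ef lam c z * g z‖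
        ≤ 4 * 2^j * (9 * (Bg * (Kf 10 / lam)^10)) := by
          apply mul_le_mul_of_nonneg_left happ (by positivity)
      _ = 36 * Bg * (Kf 10)^10 * 2^j * (lam^(10:ℕ))⁻¹ := by
          rw [div_pow, div_eq_mul_inv]
          ring
      _ ≤ (36 * Bg + 80 * Bg + 36 * Bg * (Kf 10)^10) * 2^j * (lam^(10:ℕ))⁻¹ := by
          apply mul_le_mul_of_nonneg_right _ (by positivity)
          apply mul_le_mul_of_nonneg_right _ (by positivity)
          nlinarith [pow_pos hKK 10]
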